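/- Concrete minimax lower bound: fix h > 0 and n ≥ 4, set ε = 1/(6√(2n)), p₀ = 1/16, p₁ = p₀ + ε. Let m̃ have density proportional to t ↦ sech((t−1)/h) on [0,1], let σ̃² have density proportional to t ↦ sech(t/h) on [0,1/4], independent, W = m̃² + σ̃², and Φ(p) = E[|p − m̃|] + E[|p² − W|]. Then for every function T : ({0,1} × {0,1})ⁿ → ℝ, one has max_{b ∈ {0,1}} E_{(Y_i^{(1)},Y_i^{(2)})_{i≤n} i.i.d., each coordinate i.i.d. Bernoulli(p_b)} [ |T((Y_i^{(1)},Y_i^{(2)})_{i≤n}) − Φ(p_b)| ] ≥ 1/(48·√(2n)). -/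

import Mathlib

open MeasureTheory ProbabilityTheory Set
open scoped ENNReal

/-!
Le Cam's two-point method, with the Bhattacharyya coefficient `BC(P, Q) = ∑ₓ √(P{x} Q{x})` in
place of the total variation distance. By Cauchy–Schwarz `BC² ≤ S (2 - S)` for the overlap
`S = ∑ₓ min (P{x}) (Q{x})`, and an overlap `S ≥ 1/2` forces every estimator to be off by a quarter
of `|Φ(p₀) - Φ(p₁)|` under one of the two laws. The coefficient tensorizes, so for the `2n`
independent labels it is `(√(p₀p₁) + √((1-p₀)(1-p₁)))^(2n)`, whose square is `≥ 3/4` because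
`1 - BC ≤ (p₁ - p₀)² (1/p₀ + 2) / 8 = 18 ε² / 8` per label.

The gap `Φ(p₀) - Φ(p₁)` is at least `ε/2`: moving `p` from `p₀` to `p₁` lowers `E|p - m̃|` by at
least `ε (1 - 2 P(m̃ < p₁))` and raises `E|p² - W|` by at most `p₁² - p₀²`. Since `m̃` has an
increasing density on `[0, 1]`, `P(m̃ < p₁) ≤ p₁ / (1 - p₁) ≤ 1/7`.
-/

/-- The Bernoulli measure on `Bool` with parameter `p`: mass `p` at `true` and
mass `1 − p` at `false`. -/
noncomputable def bernoulliMeasure (p : ℝ) : Measure Bool :=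
  ENNReal.ofReal p • Measure.dirac true + ENNReal.ofReal (1 - p) • Measure.dirac false

instance (p : ℝ) : IsFiniteMeasure (bernoulliMeasure p) := by
  constructor
  simp only [_root_.bernoulliMeasure, Measure.add_apply, Measure.smul_apply, smul_eq_mul,
    Measure.dirac_apply', Set.mem_univ, MeasurableSet.univ, Set.indicator_univ,
    Pi.one_apply, mul_one]
  exact ENNReal.add_lt_top.2 ⟨ENNReal.ofReal_lt_top, ENNReal.ofReal_lt_top⟩

/-- The law of `n` i.i.d. 2-snapshots, each snapshot consisting of two independent
`Bernoulli(p)` labels. -/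
noncomputable def snapshotLaw (p : ℝ) (n : ℕ) : Measure (Fin n → Bool × Bool) :=
  Measure.pi fun _ : Fin n => (_root_.bernoulliMeasure p).prod (_root_.bernoulliMeasure p)

section Bhattacharyya

variable {α : Type*} [Fintype α] [MeasurableSpace α]

noncomputable def bhattacharyyaCoeff (P Q : Measure α) : ℝ :=
  ∑ x, √(P.real {x} * Q.real {x})

variable [MeasurableSingletonClass α] {P Q : Measure α}

-- Cauchy–Schwarz with `√(PQ) = √(min P Q * max P Q)`, and `∑ max = 2 - ∑ min`.
lemma bhattacharyyaCoeff_sq_le [IsProbabilityMeasure P] [IsProbabilityMeasure Q] :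
    bhattacharyyaCoeff P Q ^ 2 ≤
      (∑ x, min (P.real {x}) (Q.real {x})) * (2 - ∑ x, min (P.real {x}) (Q.real {x})) := by
  have hmax : ∑ x, max (P.real {x}) (Q.real {x}) = 2 - ∑ x, min (P.real {x}) (Q.real {x}) := by
    have hsum : ∑ x, (P.real {x} + Q.real {x}) = 2 := by
      rw [Finset.sum_add_distrib, sum_measureReal_singleton, sum_measureReal_singleton]
      simp only [Finset.coe_univ, probReal_univ]
      norm_num
    rw [← hsum, eq_sub_iff_add_eq, ← Finset.sum_add_distrib]
    exact Finset.sum_congr rfl fun x _ => by rw [add_comm, min_add_max]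
  rw [← hmax]
  refine Finset.sum_sq_le_sum_mul_sum_of_sq_le_mul _ (fun x _ => by positivity)
    (fun x _ => by positivity) fun x _ => ?_
  rw [Real.sq_sqrt (by positivity), min_mul_max]

lemma abs_sub_mul_sum_min_le [IsFiniteMeasure P] [IsFiniteMeasure Q] (T : α → ℝ) (a b : ℝ) :
    |a - b| * ∑ x, min (P.real {x}) (Q.real {x}) ≤
      (∫ x, |T x - a| ∂P) + ∫ x, |T x - b| ∂Q := by
  rw [integral_fintype .of_finite, integral_fintype .of_finite, Finset.mul_sum,
    ← Finset.sum_add_distrib]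
  refine Finset.sum_le_sum fun x _ => ?_
  have htri : |a - b| ≤ |T x - a| + |T x - b| := abs_sub_comm a (T x) ▸ abs_sub_le a (T x) b
  calc |a - b| * min (P.real {x}) (Q.real {x})
      ≤ |T x - a| * min (P.real {x}) (Q.real {x}) +
          |T x - b| * min (P.real {x}) (Q.real {x}) := by
        rw [← add_mul]
        gcongr
    _ ≤ P.real {x} • |T x - a| + Q.real {x} • |T x - b| := by
        rw [smul_eq_mul, smul_eq_mul, mul_comm (P.real _), mul_comm (Q.real _)]
        gcongr
        exacts [min_le_left _ _, min_le_right _ _]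

theorem abs_sub_div_four_le_max_integral [IsProbabilityMeasure P] [IsProbabilityMeasure Q]
    (hPQ : 3 / 4 ≤ bhattacharyyaCoeff P Q ^ 2) (T : α → ℝ) (a b : ℝ) :
    |a - b| / 4 ≤ max (∫ x, |T x - a| ∂P) (∫ x, |T x - b| ∂Q) := by
  set S := ∑ x, min (P.real {x}) (Q.real {x})
  have hS_le : S ≤ 1 := by
    calc S ≤ ∑ x, P.real {x} := Finset.sum_le_sum fun x _ => min_le_left _ _
      _ = 1 := by simp
  have hS : 1 / 2 ≤ S := by nlinarith [bhattacharyyaCoeff_sq_le (P := P) (Q := Q)]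
  have := abs_sub_mul_sum_min_le (P := P) (Q := Q) T a b
  have := le_max_left (∫ x, |T x - a| ∂P) (∫ x, |T x - b| ∂Q)
  have := le_max_right (∫ x, |T x - a| ∂P) (∫ x, |T x - b| ∂Q)
  nlinarith [abs_nonneg (a - b)]

end Bhattacharyya

lemma bhattacharyyaCoeff_prod {α β : Type*} [Fintype α] [MeasurableSpace α] [Fintype β]
    [MeasurableSpace β] (P Q : Measure α) (P' Q' : Measure β) [SFinite P'] [SFinite Q'] :
    bhattacharyyaCoeff (P.prod P') (Q.prod Q') =
      bhattacharyyaCoeff P Q * bhattacharyyaCoeff P' Q' := by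
  simp only [bhattacharyyaCoeff, Fintype.sum_prod_type, Finset.sum_mul_sum,
    ← singleton_prod_singleton, measureReal_prod_prod]
  refine Finset.sum_congr rfl fun x _ => Finset.sum_congr rfl fun y _ => ?_
  rw [← Real.sqrt_mul (by positivity)]
  ring_nf

lemma bhattacharyyaCoeff_pi {ι : Type*} [Fintype ι] [DecidableEq ι] {β : ι → Type*}
    [∀ i, Fintype (β i)] [∀ i, MeasurableSpace (β i)] (P Q : ∀ i, Measure (β i))
    [∀ i, SigmaFinite (P i)] [∀ i, SigmaFinite (Q i)] :
    bhattacharyyaCoeff (Measure.pi P) (Measure.pi Q) = ∏ i, bhattacharyyaCoeff (P i) (Q i) := by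
  simp only [bhattacharyyaCoeff, measureReal_def, Measure.pi_singleton, ENNReal.toReal_prod,
    ← Finset.prod_mul_distrib]
  rw [Finset.prod_univ_sum, Fintype.piFinset_univ]
  exact Finset.sum_congr rfl fun x _ => Real.sqrt_prod _ fun i _ => by positivity

lemma bernoulliMeasure_real_singleton {p : ℝ} (hp₀ : 0 ≤ p) (hp₁ : p ≤ 1) (b : Bool) :
    (_root_.bernoulliMeasure p).real {b} = if b then p else 1 - p := by
  cases b <;> simp [_root_.bernoulliMeasure, measureReal_def, hp₀, hp₁]

lemma isProbabilityMeasure_bernoulliMeasure {p : ℝ} (hp₀ : 0 ≤ p) (hp₁ : p ≤ 1) :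
    IsProbabilityMeasure (_root_.bernoulliMeasure p) := by
  constructor
  simp [_root_.bernoulliMeasure, ← ENNReal.ofReal_add hp₀ (sub_nonneg.2 hp₁)]

lemma bhattacharyyaCoeff_bernoulliMeasure {p q : ℝ} (hp₀ : 0 ≤ p) (hp₁ : p ≤ 1) (hq₀ : 0 ≤ q)
    (hq₁ : q ≤ 1) :
    bhattacharyyaCoeff (_root_.bernoulliMeasure p) (_root_.bernoulliMeasure q) =
      √(p * q) + √((1 - p) * (1 - q)) := by
  simp [bhattacharyyaCoeff, bernoulliMeasure_real_singleton, hp₀, hp₁, hq₀, hq₁]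

lemma bhattacharyyaCoeff_snapshotLaw (p q : ℝ) (n : ℕ) :
    bhattacharyyaCoeff (snapshotLaw p n) (snapshotLaw q n) =
      bhattacharyyaCoeff (_root_.bernoulliMeasure p) (_root_.bernoulliMeasure q) ^ (2 * n) := by
  rw [snapshotLaw, snapshotLaw, bhattacharyyaCoeff_pi, Fin.prod_const, bhattacharyyaCoeff_prod,
    ← sq, ← pow_mul]

lemma isProbabilityMeasure_snapshotLaw {p : ℝ} (hp₀ : 0 ≤ p) (hp₁ : p ≤ 1) (n : ℕ) :
    IsProbabilityMeasure (snapshotLaw p n) := by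
  have := isProbabilityMeasure_bernoulliMeasure hp₀ hp₁
  unfold snapshotLaw
  infer_instance

lemma sqrt_sub_sqrt_sq_le {x y : ℝ} (hx : 0 < x) (hxy : x ≤ y) :
    (√y - √x) ^ 2 ≤ (y - x) ^ 2 / (4 * x) := by
  rw [le_div_iff₀ (by positivity)]
  have hsq : (√y - √x) ^ 2 * (√y + √x) ^ 2 = (y - x) ^ 2 := by
    rw [← mul_pow]
    congr 1
    linear_combination Real.sq_sqrt (hx.le.trans hxy) - Real.sq_sqrt hx.le
  have hsum : 4 * x ≤ (√y + √x) ^ 2 := by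
    have := Real.sqrt_le_sqrt hxy
    nlinarith [Real.sq_sqrt hx.le, Real.sqrt_nonneg x]
  calc (√y - √x) ^ 2 * (4 * x) ≤ (√y - √x) ^ 2 * (√y + √x) ^ 2 := by gcongr
    _ = (y - x) ^ 2 := hsq

lemma one_sub_bhattacharyyaCoeff_bernoulliMeasure_le {p q : ℝ} (hp : 0 < p) (hpq : p ≤ q)
    (hq : q < 1) :
    1 - bhattacharyyaCoeff (_root_.bernoulliMeasure p) (_root_.bernoulliMeasure q) ≤
      (q - p) ^ 2 / 8 * (1 / p + 1 / (1 - q)) := by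
  rw [bhattacharyyaCoeff_bernoulliMeasure hp.le (by linarith) (by linarith) hq.le]
  have hid : 1 - (√(p * q) + √((1 - p) * (1 - q))) =
      ((√q - √p) ^ 2 + (√(1 - p) - √(1 - q)) ^ 2) / 2 := by
    rw [Real.sqrt_mul hp.le, Real.sqrt_mul (by linarith)]
    nlinarith [Real.sq_sqrt hp.le, Real.sq_sqrt (hp.le.trans hpq),
      Real.sq_sqrt (sub_nonneg.2 hq.le), Real.sq_sqrt (sub_nonneg.2 (hpq.trans hq.le))]
  have h₁ := sqrt_sub_sqrt_sq_le hp hpq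
  have h₂ := sqrt_sub_sqrt_sq_le (sub_pos.2 hq) (sub_le_sub_left hpq 1)
  rw [show 1 - p - (1 - q) = q - p by ring] at h₂
  have e : (q - p) ^ 2 / 8 * (1 / p + 1 / (1 - q)) =
      ((q - p) ^ 2 / (4 * p) + (q - p) ^ 2 / (4 * (1 - q))) / 2 := by
    field_simp
    ring
  rw [hid, e]
  linarith

lemma three_quarters_le_bhattacharyyaCoeff_snapshotLaw_sq {p q : ℝ} (hp : 0 < p) (hpq : p ≤ q)
    (hq : q ≤ 1 / 2) {n : ℕ} (hn : n * (q - p) ^ 2 * (1 / p + 2) ≤ 1 / 2) :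
    3 / 4 ≤ bhattacharyyaCoeff (snapshotLaw p n) (snapshotLaw q n) ^ 2 := by
  set β := bhattacharyyaCoeff (_root_.bernoulliMeasure p) (_root_.bernoulliMeasure q)
  have hβ₀ : 0 ≤ β := Finset.sum_nonneg fun _ _ => Real.sqrt_nonneg _
  have hβ : 1 - β ≤ (q - p) ^ 2 / 8 * (1 / p + 2) := by
    refine (one_sub_bhattacharyyaCoeff_bernoulliMeasure_le hp hpq (by linarith)).trans ?_
    gcongr
    rw [div_le_iff₀ (by linarith)]
    linarith
  have hnβ : (n : ℝ) * (1 - β) ≤ 1 / 16 := by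
    calc (n : ℝ) * (1 - β) ≤ n * ((q - p) ^ 2 / 8 * (1 / p + 2)) := by gcongr
      _ ≤ 1 / 16 := by linarith
  rw [bhattacharyyaCoeff_snapshotLaw, ← pow_mul]
  calc (3 : ℝ) / 4 ≤ 1 + ((2 * n * 2 : ℕ) : ℝ) * (β - 1) := by push_cast; linarith
    _ ≤ (1 + (β - 1)) ^ (2 * n * 2) := one_add_mul_le_pow (by linarith) _
    _ = β ^ (2 * n * 2) := by ring

-- The paper's `Φ(p)`, with `X = m̃` and `W = m̃² + σ̃²`.
noncomputable def calibrationError {Ω : Type*} [MeasurableSpace Ω] (μ : Measure Ω) (X W : Ω → ℝ)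
    (p : ℝ) : ℝ :=
  (∫ ω, |p - X ω| ∂μ) + ∫ ω, |p ^ 2 - W ω| ∂μ

section AbsoluteDeviation

variable {Ω : Type*} [MeasurableSpace Ω] {μ : Measure Ω} [IsProbabilityMeasure μ] {X W : Ω → ℝ}

lemma integrable_abs_const_sub (hX : Integrable X μ) (c : ℝ) :
    Integrable (fun ω => |c - X ω|) μ :=
  ((integrable_const c).sub hX).abs

lemma integral_abs_sub_sub_integral_abs_sub_le (hX : Integrable X μ) (a b : ℝ) :
    (∫ ω, |b - X ω| ∂μ) - ∫ ω, |a - X ω| ∂μ ≤ |b - a| := by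
  rw [← integral_sub (integrable_abs_const_sub hX b) (integrable_abs_const_sub hX a)]
  calc ∫ ω, |b - X ω| - |a - X ω| ∂μ ≤ ∫ _, |b - a| ∂μ :=
        integral_mono ((integrable_abs_const_sub hX b).sub (integrable_abs_const_sub hX a))
          (integrable_const _) fun ω => by
            simpa using abs_sub_abs_le_abs_sub (b - X ω) (a - X ω)
    _ = |b - a| := by simp

-- Pointwise, `|a - x| - |b - x|` equals `b - a` when `b ≤ x` and is at least `a - b` otherwise.
lemma sub_mul_one_sub_two_mul_measureReal_le (hXm : Measurable X) (hX : Integrable X μ)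
    {a b : ℝ} (hab : a ≤ b) :
    (b - a) * (1 - 2 * μ.real {ω | X ω < b}) ≤ (∫ ω, |a - X ω| ∂μ) - ∫ ω, |b - X ω| ∂μ := by
  set A := {ω | X ω < b}
  have hA : MeasurableSet A := hXm measurableSet_Iio
  have hlow : ∀ ω, (b - a) - A.indicator (fun _ => 2 * (b - a)) ω ≤ |a - X ω| - |b - X ω| := by
    intro ω
    by_cases hω : ω ∈ A
    · rw [indicator_of_mem hω]
      have := abs_sub_abs_le_abs_sub (b - X ω) (a - X ω)
      rw [show b - X ω - (a - X ω) = b - a by ring, abs_of_nonneg (sub_nonneg.2 hab)] at this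
      linarith
    · rw [indicator_of_notMem hω, abs_of_nonpos (by simp [A] at hω; linarith),
        abs_of_nonpos (by simp [A] at hω; linarith)]
      linarith
  rw [← integral_sub (integrable_abs_const_sub hX a) (integrable_abs_const_sub hX b)]
  calc (b - a) * (1 - 2 * μ.real A)
      = ∫ ω, (b - a) - A.indicator (fun _ => 2 * (b - a)) ω ∂μ := by
        rw [integral_sub (integrable_const _) ((integrable_const _).indicator hA),
          integral_indicator_const _ hA]
        simp only [integral_const, probReal_univ, smul_eq_mul, one_mul]
        ring
    _ ≤ ∫ ω, |a - X ω| - |b - X ω| ∂μ :=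
        integral_mono ((integrable_const _).sub ((integrable_const _).indicator hA))
          ((integrable_abs_const_sub hX a).sub (integrable_abs_const_sub hX b)) hlow

lemma sub_mul_le_calibrationError_sub (hXm : Measurable X) (hX : Integrable X μ)
    (hW : Integrable W μ) {a b : ℝ} (ha : 0 ≤ a) (hab : a ≤ b) :
    (b - a) * (1 - 2 * μ.real {ω | X ω < b} - (a + b)) ≤
      calibrationError μ X W a - calibrationError μ X W b := by
  have h₁ := sub_mul_one_sub_two_mul_measureReal_le hXm hX hab
  have h₂ := integral_abs_sub_sub_integral_abs_sub_le hW (a ^ 2) (b ^ 2)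
  rw [abs_of_nonneg (by nlinarith)] at h₂
  unfold calibrationError
  linear_combination h₁ + h₂

end AbsoluteDeviation

lemma ae_mem_of_map_eq_smul_withDensity {Ω β : Type*} [MeasurableSpace Ω] [MeasurableSpace β]
    {μ : Measure Ω} {X : Ω → β} (hX : AEMeasurable X μ) {ν : Measure β} {s : Set β}
    (hs : MeasurableSet s) {c : ℝ≥0∞} {d : β → ℝ≥0∞}
    (hlaw : μ.map X = c • (ν.restrict s).withDensity d) :
    ∀ᵐ ω ∂μ, X ω ∈ s :=
  ae_of_ae_map hX <| hlaw ▸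
    (Measure.smul_absolutelyContinuous.trans (withDensity_absolutelyContinuous _ _)).ae_le
      (ae_restrict_mem hs)

lemma monotoneOn_inv_cosh_sub_one_div {h : ℝ} (hh : 0 < h) :
    MonotoneOn (fun t => (Real.cosh ((t - 1) / h))⁻¹) (Iic 1) := by
  intro a ha b hb hab
  refine inv_anti₀ (Real.cosh_pos _) (Real.cosh_le_cosh.2 ?_)
  rw [abs_div, abs_div, abs_of_nonpos (sub_nonpos.2 hb), abs_of_nonpos (sub_nonpos.2 ha)]
  gcongr

lemma smul_withDensity_Iio_le_of_monotoneOn {f : ℝ → ℝ} (hf : MonotoneOn f (Icc 0 1))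
    (hpos : ∀ t ∈ Icc (0 : ℝ) 1, 0 < f t) {q : ℝ} (hq₀ : 0 ≤ q) (hq₁ : q < 1) :
    ((ENNReal.ofReal (∫ t in Icc (0 : ℝ) 1, f t))⁻¹ •
      (volume.restrict (Icc (0 : ℝ) 1)).withDensity fun t => ENNReal.ofReal (f t)) (Iio q) ≤
      ENNReal.ofReal (q / (1 - q)) := by
  have hq : q ∈ Icc (0 : ℝ) 1 := ⟨hq₀, hq₁.le⟩
  have hfq := hpos q hq
  have hnum : ((volume.restrict (Icc (0 : ℝ) 1)).withDensity fun t => ENNReal.ofReal (f t))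
      (Iio q) ≤ ENNReal.ofReal (q * f q) := by
    rw [withDensity_apply _ measurableSet_Iio, Measure.restrict_restrict measurableSet_Iio]
    calc ∫⁻ t in Iio q ∩ Icc 0 1, ENNReal.ofReal (f t)
        ≤ ∫⁻ _ in Iio q ∩ Icc 0 1, ENNReal.ofReal (f q) :=
          setLIntegral_mono measurable_const fun t ht =>
            ENNReal.ofReal_le_ofReal (hf ht.2 hq ht.1.le)
      _ ≤ ENNReal.ofReal (f q) * volume (Icc 0 q) := by
          rw [setLIntegral_const]
          gcongr
          exact fun t ht => ⟨ht.2.1, ht.1.le⟩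
      _ = ENNReal.ofReal (q * f q) := by
          rw [Real.volume_Icc, sub_zero, ← ENNReal.ofReal_mul hfq.le, mul_comm]
  have hden : (1 - q) * f q ≤ ∫ t in Icc (0 : ℝ) 1, f t := by
    have hint := hf.integrableOn_isCompact (μ := volume) isCompact_Icc
    calc (1 - q) * f q = ∫ _ in Icc q 1, f q := by
          rw [setIntegral_const, Measure.real, Real.volume_Icc,
            ENNReal.toReal_ofReal (by linarith), smul_eq_mul]
      _ ≤ ∫ t in Icc q 1, f t :=
          setIntegral_mono_on (integrableOn_const (by simp))
            (hint.mono_set (Icc_subset_Icc hq₀ le_rfl)) measurableSet_Icc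
            fun t ht => hf hq ⟨hq₀.trans ht.1, ht.2⟩ ht.1
      _ ≤ ∫ t in Icc 0 1, f t :=
          setIntegral_mono_set hint
            (ae_restrict_of_forall_mem measurableSet_Icc fun t ht => (hpos t ht).le)
            (Icc_subset_Icc hq₀ le_rfl).eventuallyLE
  rw [Measure.smul_apply, smul_eq_mul]
  calc (ENNReal.ofReal (∫ t in Icc (0 : ℝ) 1, f t))⁻¹ * _
      ≤ (ENNReal.ofReal ((1 - q) * f q))⁻¹ * ENNReal.ofReal (q * f q) := by
        gcongr
    _ = ENNReal.ofReal (q / (1 - q)) := by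
        rw [mul_comm, ← div_eq_mul_inv,
          ← ENNReal.ofReal_div_of_pos (mul_pos (sub_pos.2 hq₁) hfq),
          mul_div_mul_right _ _ hfq.ne']

lemma measureReal_lt_le_of_map_eq_of_monotoneOn {Ω : Type*} [MeasurableSpace Ω] {μ : Measure Ω}
    {X : Ω → ℝ} (hX : Measurable X) {f : ℝ → ℝ} (hf : MonotoneOn f (Icc 0 1))
    (hpos : ∀ t ∈ Icc (0 : ℝ) 1, 0 < f t)
    (hlaw : μ.map X = (ENNReal.ofReal (∫ t in Icc (0 : ℝ) 1, f t))⁻¹ •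
      (volume.restrict (Icc (0 : ℝ) 1)).withDensity fun t => ENNReal.ofReal (f t))
    {q : ℝ} (hq₀ : 0 ≤ q) (hq₁ : q < 1) :
    μ.real {ω | X ω < q} ≤ q / (1 - q) := by
  have := smul_withDensity_Iio_le_of_monotoneOn hf hpos hq₀ hq₁
  rw [← hlaw, Measure.map_apply hX measurableSet_Iio] at this
  exact ENNReal.toReal_le_of_le_ofReal (div_nonneg hq₀ (sub_nonneg.2 hq₁.le)) this

lemma one_div_six_mul_sqrt_two_mul_le {n : ℕ} (hn : 4 ≤ n) : 1 / (6 * √(2 * n)) ≤ 1 / 16 := by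
  have hn' : (4 : ℝ) ≤ n := by exact_mod_cast hn
  have hsqrt : (8 / 3 : ℝ) ≤ √(2 * n) :=
    (Real.le_sqrt (by norm_num) (by positivity)).2 (by linarith)
  rw [div_le_div_iff₀ (by positivity) (by norm_num)]
  linarith

lemma natCast_mul_one_div_six_mul_sqrt_two_mul_sq {n : ℕ} (hn : n ≠ 0) :
    n * (1 / (6 * √(2 * n))) ^ 2 = 1 / 72 := by
  rw [div_pow, mul_pow, Real.sq_sqrt (by positivity)]
  field_simp
  ring

theorem minimax_lower_bound_general
    {Ω : Type*} [MeasurableSpace Ω] (μ : Measure Ω) [IsProbabilityMeasure μ]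
    (h : ℝ) (hh : 0 < h) (n : ℕ) (hn : 4 ≤ n)
    (mt sg : Ω → ℝ) (hmt : Measurable mt) (hsg : Measurable sg)
    (hlaw1 : Measure.map mt μ =
      (ENNReal.ofReal (∫ t in Set.Icc (0:ℝ) 1, (Real.cosh ((t - 1) / h))⁻¹))⁻¹ •
        ((volume.restrict (Set.Icc (0:ℝ) 1)).withDensity
          fun t => ENNReal.ofReal ((Real.cosh ((t - 1) / h))⁻¹)))
    (hlaw2 : Measure.map sg μ =
      (ENNReal.ofReal (∫ t in Set.Icc (0:ℝ) (1/4), (Real.cosh (t / h))⁻¹))⁻¹ •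
        ((volume.restrict (Set.Icc (0:ℝ) (1/4))).withDensity
          fun t => ENNReal.ofReal ((Real.cosh (t / h))⁻¹)))
    (Φ : ℝ → ℝ)
    (hΦ : ∀ p : ℝ, Φ p = (∫ ω, |p - mt ω| ∂μ) + ∫ ω, |p ^ 2 - (mt ω ^ 2 + sg ω)| ∂μ)
    (T : (Fin n → Bool × Bool) → ℝ) :
    1 / (48 * Real.sqrt (2 * n)) ≤
      max (∫ y, |T y - Φ (1/16)| ∂(snapshotLaw (1/16) n))
          (∫ y, |T y - Φ (1/16 + 1 / (6 * Real.sqrt (2 * n)))|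
            ∂(snapshotLaw (1/16 + 1 / (6 * Real.sqrt (2 * n))) n)) := by
  set ε := 1 / (6 * √(2 * n)) with hε
  have hε_pos : 0 < ε := by positivity
  have hε_le : ε ≤ 1 / 16 := one_div_six_mul_sqrt_two_mul_le hn
  have hnε : n * ε ^ 2 = 1 / 72 := natCast_mul_one_div_six_mul_sqrt_two_mul_sq (by omega)
  have hm := ae_mem_of_map_eq_smul_withDensity hmt.aemeasurable measurableSet_Icc hlaw1
  have hs := ae_mem_of_map_eq_smul_withDensity hsg.aemeasurable measurableSet_Icc hlaw2
  have hm_int : Integrable mt μ := .of_mem_Icc 0 1 hmt.aemeasurable hm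
  have hW_int : Integrable (fun ω => mt ω ^ 2 + sg ω) μ :=
    .of_mem_Icc 0 2 ((hmt.pow_const 2).add hsg).aemeasurable <| by
      filter_upwards [hm, hs] with ω h₁ h₂
      constructor <;> nlinarith [h₁.1, h₁.2, h₂.1, h₂.2]
  have hP : μ.real {ω | mt ω < 1 / 16 + ε} ≤ 1 / 7 := by
    refine (measureReal_lt_le_of_map_eq_of_monotoneOn hmt
      ((monotoneOn_inv_cosh_sub_one_div hh).mono Icc_subset_Iic_self)
      (fun t _ => inv_pos.2 (Real.cosh_pos _)) hlaw1 (by positivity) (by linarith)).trans ?_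
    rw [div_le_iff₀ (by linarith)]
    linarith
  have hgap : ε / 2 ≤ Φ (1 / 16) - Φ (1 / 16 + ε) := by
    rw [show Φ = calibrationError μ mt (fun ω => mt ω ^ 2 + sg ω) from funext hΦ]
    refine le_trans ?_ (sub_mul_le_calibrationError_sub hmt hm_int hW_int (by norm_num)
      (le_add_of_nonneg_right hε_pos.le))
    rw [add_sub_cancel_left]
    nlinarith [mul_le_mul_of_nonneg_left hP hε_pos.le, mul_le_mul_of_nonneg_left hε_le hε_pos.le]
  have haff := three_quarters_le_bhattacharyyaCoeff_snapshotLaw_sq (p := 1 / 16) (q := 1 / 16 + ε)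
    (n := n) (by norm_num) (by linarith) (by linarith) (by nlinarith)
  have := isProbabilityMeasure_snapshotLaw (p := 1 / 16) (by norm_num) (by norm_num) n
  have := isProbabilityMeasure_snapshotLaw (p := 1 / 16 + ε) (by positivity) (by linarith) n
  calc 1 / (48 * √(2 * n)) = ε / 2 / 4 := by rw [hε]; ring
    _ ≤ |Φ (1 / 16) - Φ (1 / 16 + ε)| / 4 := by gcongr; exact hgap.trans (le_abs_self _)
    _ ≤ _ := abs_sub_div_four_le_max_integral haff T _ _

/-- Concrete minimax lower bound: with `ε = 1/(6√(2n))`, `p₀ = 1/16`, `p₁ = p₀ + ε`,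
`m̃` distributed with density proportional to `t ↦ sech((t−1)/h)` on `[0,1]`, `σ̃²`
independent with density proportional to `t ↦ sech(t/h)` on `[0,1/4]`,
`W = m̃² + σ̃²` and `Φ(p) = E|p − m̃| + E|p² − W|`, every estimator
`T : ({0,1}×{0,1})ⁿ → ℝ` of `Φ(p_b)` from `n` i.i.d. 2-snapshots of
`Bernoulli(p_b)` labels incurs worst-case expected error at least `1/(48√(2n))`. -/
theorem minimax_lower_bound
    {Ω : Type*} [MeasurableSpace Ω] (μ : Measure Ω) [IsProbabilityMeasure μ]
    (h : ℝ) (hh : 0 < h) (n : ℕ) (hn : 4 ≤ n)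
    (mt sg : Ω → ℝ) (hmt : Measurable mt) (hsg : Measurable sg)
    (hindep : IndepFun mt sg μ)
    (hlaw1 : Measure.map mt μ =
      (ENNReal.ofReal (∫ t in Set.Icc (0:ℝ) 1, (Real.cosh ((t - 1) / h))⁻¹))⁻¹ •
        ((volume.restrict (Set.Icc (0:ℝ) 1)).withDensity
          fun t => ENNReal.ofReal ((Real.cosh ((t - 1) / h))⁻¹)))
    (hlaw2 : Measure.map sg μ =
      (ENNReal.ofReal (∫ t in Set.Icc (0:ℝ) (1/4), (Real.cosh (t / h))⁻¹))⁻¹ •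
        ((volume.restrict (Set.Icc (0:ℝ) (1/4))).withDensity
          fun t => ENNReal.ofReal ((Real.cosh (t / h))⁻¹)))
    (Φ : ℝ → ℝ)
    (hΦ : ∀ p : ℝ, Φ p = (∫ ω, |p - mt ω| ∂μ) + ∫ ω, |p ^ 2 - (mt ω ^ 2 + sg ω)| ∂μ)
    (T : (Fin n → Bool × Bool) → ℝ) :
    1 / (48 * Real.sqrt (2 * n)) ≤
      max (∫ y, |T y - Φ (1/16)| ∂(snapshotLaw (1/16) n))
          (∫ y, |T y - Φ (1/16 + 1 / (6 * Real.sqrt (2 * n)))|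
            ∂(snapshotLaw (1/16 + 1 / (6 * Real.sqrt (2 * n))) n)) :=
  minimax_lower_bound_general μ h hh n hn mt sg hmt hsg hlaw1 hlaw2 Φ hΦ T
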